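/- arXiv:1210.0523 — 5 statements merged into one kernel-verified Lean document; each statement's English description precedes it below -/
import Mathlib

section
/- Let T = [[1,3],[0,1]] and R = [[0,1],[-1,-1]] in GL(2, ℤ). Then R^3 = I, and the group homomorphism from the free product ℤ ∗ ℤ/3ℤ to GL(2, ℤ) sending the generator of ℤ to T and the generator of ℤ/3ℤ to R is injective; in particular the subgroup of GL(2, ℤ) generated by R and T is isomorphic to ℤ ∗ ℤ/3ℤ. -/
/-!
Ping-pong on `ℤ²`. Call a vector `(x, y)` with `y ≠ 0` inside the window if its slope
`x / y` lies in `(-2, 1)`, and outside if it lies outside `[-2, 1]`. Every nonzero power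
of `T` shifts slopes by a nonzero multiple of `3`, hence moves the window outside; `R` and
`R²` act on slopes by `s ↦ -1 / (s + 1)` and `s ↦ -1 - 1 / s`, which move the outside into
the window. Since `ℤ/3ℤ` has three elements, the ping-pong lemma for free products makes
the map `ℤ ∗ ℤ/3ℤ → GL(2, ℤ)` injective, and its image is generated by `T` and `R`.
-/

open scoped Pointwise

universe u

namespace Monoid.Coprod

variable {H₁ H₂ : Type u} [Group H₁] [Group H₂]

instance instGroupCond : (b : Bool) → Group (cond b H₁ H₂)
  | true => ‹Group H₁›
  | false => ‹Group H₂›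

def mulEquivCoprodI : H₁ ∗ H₂ ≃* CoprodI (fun b : Bool => cond b H₁ H₂) :=
  MonoidHom.toMulEquiv
    (lift (CoprodI.of (M := fun b : Bool => cond b H₁ H₂) (i := true))
      (CoprodI.of (M := fun b : Bool => cond b H₁ H₂) (i := false)))
    (CoprodI.lift fun | true => inl | false => inr)
    (hom_ext (by ext; simp) (by ext; simp))
    (CoprodI.ext_hom _ _ fun | true => by ext; simp | false => by ext; simp)

theorem injective_of_ping_pong {G α : Type*} [Group G] [MulAction G α] (φ : H₁ ∗ H₂ →* G)
    (hcard : 3 ≤ Cardinal.mk H₁ ∨ 3 ≤ Cardinal.mk H₂) {X Y : Set α} (hX : X.Nonempty)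
    (hY : Y.Nonempty) (hXY : Disjoint X Y) (h₁ : ∀ h : H₁, h ≠ 1 → φ (inl h) • Y ⊆ X)
    (h₂ : ∀ h : H₂, h ≠ 1 → φ (inr h) • X ⊆ Y) : Function.Injective φ := by
  set ψ := φ.comp mulEquivCoprodI.symm.toMonoidHom
  have hψ : Function.Injective ψ := by
    rw [← CoprodI.lift.apply_symm_apply ψ]
    refine CoprodI.lift_injective_of_ping_pong _ ?_ (fun b => cond b X Y) ?_ ?_ ?_
    · rcases hcard with h | h
      exacts [Or.inr ⟨true, h⟩, Or.inr ⟨false, h⟩]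
    · rintro (_ | _) <;> assumption
    · rintro (_ | _) (_ | _) hne
      exacts [absurd rfl hne, hXY.symm, hXY, absurd rfl hne]
    · rintro (_ | _) (_ | _) hne h hh
      · exact absurd rfl hne
      · simpa [ψ, mulEquivCoprodI] using h₂ h hh
      · simpa [ψ, mulEquivCoprodI] using h₁ h hh
      · exact absurd rfl hne
  have hφ : φ = ψ.comp mulEquivCoprodI.toMonoidHom := by ext <;> simp [ψ]
  rw [hφ]
  exact hψ.comp mulEquivCoprodI.injective

end Monoid.Coprod

section ZModPowers

variable {G : Type*} [Group G] {n : ℕ} (g : G) (hg : g ^ n = 1)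

def zmodPowersHom : Multiplicative (ZMod n) →* G :=
  AddMonoidHom.toMultiplicativeLeft <| ZMod.lift n ⟨zmultiplesHom _ (Additive.ofMul g), by
    rw [zmultiplesHom_apply, natCast_zsmul, ← ofMul_pow, hg, ofMul_one]⟩

lemma zmodPowersHom_ofAdd_intCast (k : ℤ) :
    zmodPowersHom g hg (Multiplicative.ofAdd (k : ZMod n)) = g ^ k := by
  simp [zmodPowersHom]

lemma zmodPowersHom_ofAdd_one : zmodPowersHom g hg (Multiplicative.ofAdd 1) = g := by
  simpa using zmodPowersHom_ofAdd_intCast g hg 1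

lemma range_zmodPowersHom : (zmodPowersHom g hg).range = Subgroup.zpowers g := by
  ext x
  constructor
  · rintro ⟨y, rfl⟩
    obtain ⟨k, hk⟩ := ZMod.intCast_surjective (Multiplicative.toAdd y)
    exact ⟨k, by rw [← ofAdd_toAdd y, ← hk, zmodPowersHom_ofAdd_intCast]⟩
  · rintro ⟨k, rfl⟩
    exact ⟨_, zmodPowersHom_ofAdd_intCast g hg k⟩

end ZModPowers

/-- `(v 0 + 2 v 1) (v 0 - v 1) < 0` says that `v 1 ≠ 0` and `v 0 / v 1 ∈ (-2, 1)`. -/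
def slopeWindow : Set (Fin 2 → ℤ) := {v | (v 0 + 2 * v 1) * (v 0 - v 1) < 0}

def slopeOutside : Set (Fin 2 → ℤ) := {v | v 1 ≠ 0 ∧ 0 < (v 0 + 2 * v 1) * (v 0 - v 1)}

lemma disjoint_slopeOutside_slopeWindow : Disjoint slopeOutside slopeWindow :=
  Set.disjoint_left.2 fun _ hv hv' => (hv.2.trans hv').false

lemma ne_zero_of_mem_slopeWindow {v : Fin 2 → ℤ} (hv : v ∈ slopeWindow) : v 1 ≠ 0 := by
  intro h
  simp only [slopeWindow, Set.mem_ofPred_eq, h] at hv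
  nlinarith [mul_self_nonneg (v 0)]

section Generators

variable {R T : GL (Fin 2) ℤ}

lemma pow_three_eq_one_of_coe_eq (hR : (R : Matrix (Fin 2) (Fin 2) ℤ) = !![0, 1; -1, -1]) :
    R ^ 3 = 1 := by
  ext i j
  fin_cases i <;> fin_cases j <;> simp [pow_succ, hR]

lemma smul_eq_of_coe_eq (hR : (R : Matrix (Fin 2) (Fin 2) ℤ) = !![0, 1; -1, -1])
    (v : Fin 2 → ℤ) : R • v = ![v 1, -v 0 - v 1] := by
  simp [Matrix.GeneralLinearGroup.fin_two_smul, hR, sub_eq_add_neg]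

lemma sq_smul_eq_of_coe_eq (hR : (R : Matrix (Fin 2) (Fin 2) ℤ) = !![0, 1; -1, -1])
    (v : Fin 2 → ℤ) : (R ^ 2) • v = ![-v 0 - v 1, v 0] := by
  simp [sq, mul_smul, smul_eq_of_coe_eq hR, sub_eq_add_neg]

lemma zpow_smul_eq_of_coe_eq (hT : (T : Matrix (Fin 2) (Fin 2) ℤ) = !![1, 3; 0, 1]) (n : ℤ)
    (v : Fin 2 → ℤ) : (T ^ n) • v = ![v 0 + 3 * n * v 1, v 1] := by
  have hTv (w : Fin 2 → ℤ) : T • w = ![w 0 + 3 * w 1, w 1] := by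
    simp [Matrix.GeneralLinearGroup.fin_two_smul, hT]
  induction n using Int.induction_on generalizing v with
  | zero => ext i; fin_cases i <;> simp
  | succ k ih =>
    rw [zpow_add_one, mul_smul, hTv, ih]
    ext i; fin_cases i <;> simp; ring
  | pred k ih =>
    have hTinv : T⁻¹ • v = ![v 0 - 3 * v 1, v 1] := by
      rw [inv_smul_eq_iff, hTv]; ext i; fin_cases i <;> simp
    rw [zpow_sub_one, mul_smul, hTinv, ih]
    ext i; fin_cases i <;> simp; ring

lemma zpow_smul_slopeWindow_subset (hT : (T : Matrix (Fin 2) (Fin 2) ℤ) = !![1, 3; 0, 1])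
    {n : ℤ} (hn : n ≠ 0) : (T ^ n) • slopeWindow ⊆ slopeOutside := by
  refine Set.smul_set_subset_iff.2 fun v hv => ?_
  refine ⟨by simpa [zpow_smul_eq_of_coe_eq hT] using ne_zero_of_mem_slopeWindow hv, ?_⟩
  simp only [slopeWindow, Set.mem_ofPred_eq] at hv
  simp only [zpow_smul_eq_of_coe_eq hT, Matrix.cons_val_zero, Matrix.cons_val_one]
  -- With `a = v 0 + 2 v 1`, `b = v 0 - v 1` the new form is `n(n+1)a² + n(n-1)b² - (2n²-1)ab`.
  have hn_succ : 0 ≤ n * (n + 1) := by rcases hn.lt_or_gt with h | h <;> nlinarith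
  have hn_pred : 0 ≤ n * (n - 1) := by rcases hn.lt_or_gt with h | h <;> nlinarith
  have hn_sq : 0 < 2 * n ^ 2 - 1 := by rcases hn.lt_or_gt with h | h <;> nlinarith
  nlinarith [mul_nonneg hn_succ (sq_nonneg (v 0 + 2 * v 1)),
    mul_nonneg hn_pred (sq_nonneg (v 0 - v 1)), mul_pos hn_sq (neg_pos.2 hv)]

lemma smul_slopeOutside_subset (hR : (R : Matrix (Fin 2) (Fin 2) ℤ) = !![0, 1; -1, -1]) :
    R • slopeOutside ⊆ slopeWindow := by
  refine Set.smul_set_subset_iff.2 fun v hv => ?_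
  simp only [slopeWindow, Set.mem_ofPred_eq, smul_eq_of_coe_eq hR, Matrix.cons_val_zero,
    Matrix.cons_val_one]
  nlinarith [hv.2, sq_nonneg (v 0 + 2 * v 1)]

lemma sq_smul_slopeOutside_subset (hR : (R : Matrix (Fin 2) (Fin 2) ℤ) = !![0, 1; -1, -1]) :
    (R ^ 2) • slopeOutside ⊆ slopeWindow := by
  refine Set.smul_set_subset_iff.2 fun v hv => ?_
  simp only [slopeWindow, Set.mem_ofPred_eq, sq_smul_eq_of_coe_eq hR, Matrix.cons_val_zero,
    Matrix.cons_val_one]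
  nlinarith [hv.2, sq_nonneg (v 0 - v 1)]

open Monoid.Coprod in
theorem coprod_hom_injective_of_generators
    (hR : (R : Matrix (Fin 2) (Fin 2) ℤ) = !![0, 1; -1, -1])
    (hT : (T : Matrix (Fin 2) (Fin 2) ℤ) = !![1, 3; 0, 1])
    (φ : Multiplicative ℤ ∗ Multiplicative (ZMod 3) →* GL (Fin 2) ℤ)
    (hφT : φ (inl (Multiplicative.ofAdd 1)) = T) (hφR : φ (inr (Multiplicative.ofAdd 1)) = R) :
    Function.Injective φ := by
  refine injective_of_ping_pong φ (Or.inr (by simp)) ⟨![2, 1], by simp [slopeOutside]⟩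
    ⟨![0, 1], by simp [slopeWindow]⟩
    disjoint_slopeOutside_slopeWindow (fun h hh => ?_) (fun h hh => ?_)
  · have hφh : φ (inl h) = T ^ Multiplicative.toAdd h := by
      rw [← hφT]; exact MonoidHom.apply_mint _ (φ.comp inl) h
    exact hφh ▸ zpow_smul_slopeWindow_subset hT (by simpa using hh)
  · obtain rfl | rfl : h = .ofAdd 1 ∨ h = .ofAdd 1 ^ 2 := by revert h hh; decide
    · exact hφR ▸ smul_slopeOutside_subset hR
    · rw [map_pow, map_pow, hφR]
      exact sq_smul_slopeOutside_subset hR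

end Generators

/-- For `T = [[1,3],[0,1]]` and `R = [[0,1],[-1,-1]]` in `GL(2,ℤ)` we have
`R^3 = 1`, the homomorphism `ℤ ∗ ℤ/3ℤ →* GL(2,ℤ)` sending the generator of `ℤ` to `T`
and the generator of `ℤ/3ℤ` to `R` is injective, and consequently the subgroup of
`GL(2,ℤ)` generated by `R` and `T` is isomorphic to `ℤ ∗ ℤ/3ℤ`. -/
theorem sl2_hypergeometric_splits_as_Z_free_prod_Z3
    (R T : GL (Fin 2) ℤ)
    (hR : (R : Matrix (Fin 2) (Fin 2) ℤ) = !![0, 1; -1, -1])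
    (hT : (T : Matrix (Fin 2) (Fin 2) ℤ) = !![1, 3; 0, 1]) :
    R ^ 3 = 1 ∧
    (∀ φ : Monoid.Coprod (Multiplicative ℤ) (Multiplicative (ZMod 3)) →* GL (Fin 2) ℤ,
        φ (Monoid.Coprod.inl (Multiplicative.ofAdd (1 : ℤ))) = T →
        φ (Monoid.Coprod.inr (Multiplicative.ofAdd (1 : ZMod 3))) = R →
        Function.Injective φ) ∧
    Nonempty (Monoid.Coprod (Multiplicative ℤ) (Multiplicative (ZMod 3)) ≃*
      (Subgroup.closure ({R, T} : Set (GL (Fin 2) ℤ)))) := by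
  have hR3 : R ^ 3 = 1 := pow_three_eq_one_of_coe_eq hR
  refine ⟨hR3, coprod_hom_injective_of_generators hR hT, ?_⟩
  let φ := Monoid.Coprod.lift (zpowersHom _ T) (zmodPowersHom R hR3)
  have hφ : Function.Injective φ := coprod_hom_injective_of_generators hR hT φ
    (by simp [φ]) (by simp [φ, zmodPowersHom_ofAdd_one])
  have hrange : φ.range = Subgroup.closure {R, T} := by
    rw [Monoid.Coprod.range_lift, Subgroup.range_zpowersHom, range_zmodPowersHom,
      Subgroup.zpowers_eq_closure, Subgroup.zpowers_eq_closure, ← Subgroup.closure_union,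
      Set.union_comm, Set.insert_eq]
  exact ⟨(MonoidHom.ofInjective hφ).trans (MulEquiv.subgroupCongr hrange)⟩
end

section
/- For all integers d, k, let R, T be the above 4×4 integer matrices and let B = [[-1,0,0,0],[0,1,0,-1],[-d,0,1,0],[0,0,0,-1]]. Then B^2 = I, B·R·B = R^{-1}, and B·T^{-1}·B = T. -/
open scoped MatrixGroups

/-!
`B` is an involution, and so are `B * R` and `B * T` (a direct matrix computation). In any group,
if `b` and `b * x` are involutions then conjugation by `b` inverts `x`, which gives both
`B * R * B = R⁻¹` and `B * T⁻¹ * B = T`.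
-/

section Involution

variable {G : Type*} [Group G] {b x : G}

theorem mul_inv_mul_eq_of_mul_self_eq_one (hb : b * b = 1) (h : b * x * b * x = 1) :
    b * x⁻¹ * b = x := by
  have hb_inv : b⁻¹ = b := inv_eq_of_mul_eq_one_right hb
  calc b * x⁻¹ * b = (b * x * b)⁻¹ := by simp only [mul_inv_rev, hb_inv, mul_assoc]
    _ = x := by rw [eq_inv_of_mul_eq_one_left h, inv_inv]

end Involution

namespace Hypergeometric

def R (d k : ℤ) : Matrix (Fin 4) (Fin 4) ℤ :=
  !![1, 1, 0, 0; 0, 1 - k, -1, 1; d, d, 1, 0; 0, -k, -1, 1]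

def T : Matrix (Fin 4) (Fin 4) ℤ :=
  !![1, 0, 0, 0; 0, 1, 0, 1; 0, 0, 1, 0; 0, 0, 0, 1]

def B (d : ℤ) : Matrix (Fin 4) (Fin 4) ℤ :=
  !![-1, 0, 0, 0; 0, 1, 0, -1; -d, 0, 1, 0; 0, 0, 0, -1]

theorem B_mul_B (d : ℤ) : B d * B d = 1 := by
  ext i j
  fin_cases i <;> fin_cases j <;> simp [B, Matrix.mul_apply, Fin.sum_univ_four]

theorem B_mul_R_mul_B_mul_R (d k : ℤ) : B d * R d k * B d * R d k = 1 := by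
  ext i j
  fin_cases i <;> fin_cases j <;>
    simp [B, R, Matrix.mul_apply, Fin.sum_univ_four, sub_eq_neg_add, mul_comm]

theorem B_mul_T_mul_B_mul_T (d : ℤ) : B d * T * B d * T = 1 := by
  ext i j
  fin_cases i <;> fin_cases j <;> simp [B, T, Matrix.mul_apply, Fin.sum_univ_four]

end Hypergeometric

/-- For all integers `d, k`, with `R = T·U`, `T` the hypergeometric
matrices and `B = [[-1,0,0,0],[0,1,0,-1],[-d,0,1,0],[0,0,0,-1]]`, we have `B² = 1`,
`B·R·B = R⁻¹` and `B·T⁻¹·B = T` in `GL(4,ℤ)`. -/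
theorem involution_conjugates_R_to_inverse
    (d k : ℤ) (R T B : GL (Fin 4) ℤ)
    (hR : (R : Matrix (Fin 4) (Fin 4) ℤ) =
      !![1, 1, 0, 0; 0, 1 - k, -1, 1; d, d, 1, 0; 0, -k, -1, 1])
    (hT : (T : Matrix (Fin 4) (Fin 4) ℤ) =
      !![1, 0, 0, 0; 0, 1, 0, 1; 0, 0, 1, 0; 0, 0, 0, 1])
    (hB : (B : Matrix (Fin 4) (Fin 4) ℤ) =
      !![-1, 0, 0, 0; 0, 1, 0, -1; -d, 0, 1, 0; 0, 0, 0, -1]) :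
    B ^ 2 = 1 ∧ B * R * B = R⁻¹ ∧ B * T⁻¹ * B = T := by
  have hBB : B * B = 1 := Units.ext <| by
    push_cast [hB]; exact Hypergeometric.B_mul_B d
  have hBRBR : B * R * B * R = 1 := Units.ext <| by
    push_cast [hB, hR]; exact Hypergeometric.B_mul_R_mul_B_mul_R d k
  have hBTBT : B * T * B * T = 1 := Units.ext <| by
    push_cast [hB, hT]; exact Hypergeometric.B_mul_T_mul_B_mul_T d
  exact ⟨(sq B).trans hBB, eq_inv_of_mul_eq_one_left hBRBR,
    mul_inv_mul_eq_of_mul_self_eq_one hBB hBTBT⟩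
end

section
/- Let R and T be the above 4×4 integer matrices with d = 1 and k = 2 (the case with parameters (1/6, 1/6, 5/6, 5/6)). Then (R·T)^8 = I. In particular, the group homomorphism from the free group on two generators to GL(4, ℤ) sending the generators to T and R is not injective, so the subgroup generated by R and T is not the free product of the cyclic subgroups generated by T and by R. -/
/-!
A direct computation gives `(R T)^4 = -1`, whence `(R T)^8 = 1`. The words representing
`(R T)^8` stay nontrivial: in the free group it has exponent sum `16`, and in the free product
the projection onto the factor `⟨T⟩` sends it to `T^8`, a transvection with off-diagonal
entry `8`.
-/

open scoped MatrixGroups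
open Function

namespace Matrix

variable {n R : Type*} [Fintype n] [DecidableEq n] [CommRing R]

theorem transvection_pow {i j : n} (hij : i ≠ j) (c : R) (k : ℕ) :
    transvection i j c ^ k = transvection i j (k * c) := by
  induction k with
  | zero => simp
  | succ k ih =>
    rw [pow_succ, ih, transvection_mul_transvection_same _ _ hij, Nat.cast_succ, add_one_mul]

theorem transvection_pow_ne_one [NoZeroDivisors R] [CharZero R] {i j : n} (hij : i ≠ j)
    {c : R} (hc : c ≠ 0) {k : ℕ} (hk : k ≠ 0) : transvection i j c ^ k ≠ 1 := by
  rw [transvection_pow hij]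
  intro h
  simpa [transvection, hij, hc, hk] using congrFun (congrFun h i) j

end Matrix

theorem FreeGroup.lift_not_injective_of_mul_pow_eq_one {α G : Type*} [Group G] (f : α → G)
    (a b : α) {k : ℕ} (hk : k ≠ 0) (h : (f a * f b) ^ k = 1) :
    ¬ Injective (FreeGroup.lift f) := by
  intro hinj
  have hw : (of a * of b) ^ k = 1 := hinj (by simpa using h)
  have hsum :=
    congrArg (fun w ↦ (FreeGroup.lift fun _ ↦ Multiplicative.ofAdd (1 : ℤ)) w |>.toAdd) hw
  simp only [_root_.map_pow, _root_.map_mul, lift_apply_of, _root_.map_one, toAdd_pow, toAdd_mul,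
    toAdd_ofAdd, toAdd_one, nsmul_eq_mul] at hsum
  omega

theorem Monoid.Coprod.not_injective_of_mul_pow_eq_one {M N P : Type*} [Monoid M] [Monoid N]
    [Monoid P] (ψ : Monoid.Coprod M N →* P) {m : M} {n : N} {k : ℕ} (hm : m ^ k ≠ 1)
    (h : (ψ (inr n) * ψ (inl m)) ^ k = 1) : ¬ Injective ψ := by
  intro hinj
  have hw : (inr n * inl m) ^ k = 1 := hinj (by simpa using h)
  exact hm (by simpa using congrArg fst hw)

/-- For `d = 1`, `k = 2` (parameters `(1/6,1/6,5/6,5/6)`), the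
hypergeometric matrices satisfy `(R·T)^8 = 1`. In particular the homomorphism from the
free group on two generators sending the generators to `T` and `R` is not injective, and
no homomorphism from the free product of the cyclic subgroups generated by `T` and by `R`
restricting to the identity on each factor is injective. -/
theorem relation_RT_pow_eight
    (R T : GL (Fin 4) ℤ)
    (hR : (R : Matrix (Fin 4) (Fin 4) ℤ) =
      !![1, 1, 0, 0; 0, -1, -1, 1; 1, 1, 1, 0; 0, -2, -1, 1])
    (hT : (T : Matrix (Fin 4) (Fin 4) ℤ) =
      !![1, 0, 0, 0; 0, 1, 0, 1; 0, 0, 1, 0; 0, 0, 0, 1]) :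
    (R * T) ^ 8 = 1 ∧
    ¬ Function.Injective (FreeGroup.lift ![T, R] : FreeGroup (Fin 2) →* GL (Fin 4) ℤ) ∧
    (∀ ψ : Monoid.Coprod (Subgroup.zpowers T) (Subgroup.zpowers R) →* GL (Fin 4) ℤ,
        (∀ g : Subgroup.zpowers T, ψ (Monoid.Coprod.inl g) = (g : GL (Fin 4) ℤ)) →
        (∀ g : Subgroup.zpowers R, ψ (Monoid.Coprod.inr g) = (g : GL (Fin 4) ℤ)) →
        ¬ Function.Injective ψ) := by
  have hRT4 : ((R * T : GL (Fin 4) ℤ) : Matrix (Fin 4) (Fin 4) ℤ) ^ 4 = -1 := by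
    rw [Units.val_mul, hR, hT]
    decide
  have hRT : (R * T) ^ 8 = 1 := by
    ext1
    rw [Units.val_pow_eq_pow_val, show 8 = 4 * 2 from rfl, pow_mul, hRT4]
    simp
  have hT8 : T ^ 8 ≠ 1 := by
    have hT' : (T : Matrix (Fin 4) (Fin 4) ℤ) = Matrix.transvection 1 3 1 := by
      rw [hT]
      decide
    intro h
    refine Matrix.transvection_pow_ne_one (i := (1 : Fin 4)) (j := 3) (by decide)
      (one_ne_zero : (1 : ℤ) ≠ 0) (k := 8) (by decide) ?_
    rw [← hT', ← Units.val_pow_eq_pow_val, h, Units.val_one]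
  refine ⟨hRT, FreeGroup.lift_not_injective_of_mul_pow_eq_one _ 1 0 (by decide : 8 ≠ 0) hRT,
    fun ψ hl hr ↦ ?_⟩
  refine Monoid.Coprod.not_injective_of_mul_pow_eq_one ψ
    (m := ⟨T, Subgroup.mem_zpowers T⟩) (n := ⟨R, Subgroup.mem_zpowers R⟩) (k := 8) ?_ ?_
  · exact fun h ↦ hT8 (congrArg Subtype.val h)
  · rw [hl, hr]
    exact hRT
end

section
/- Let R and T be the above 4×4 integer matrices with d = 2 and k = 3 (the case with parameters (1/4, 1/3, 2/3, 3/4)). Then (R^6·T)^2·(R^6·T^{-1})^2 = I, where T^{-1} is the inverse of T in GL(4, ℤ). -/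
open scoped MatrixGroups

/-!
`R ^ 6` is an involution `s`, and `T = 1 + e` with a matrix unit `e` satisfying `e * e = 0` and
`e * s * e = 0`. Expanding, `(s * (1 ± e)) ^ 2 = 1 ± m` with `m = e + s * e * s`, and
`m * m = 0`, so the product of the two squares is `1 - m * m = 1`.
-/

section Ring

variable {α : Type*} [Ring α] {s e : α}

theorem sq_mul_one_add_eq (hs : s * s = 1) (hese : e * s * e = 0) :
    (s * (1 + e)) ^ 2 = 1 + (e + s * e * s) := by
  have hses : s * e * s * e = 0 := by rw [mul_assoc, mul_assoc, ← mul_assoc e, hese, mul_zero]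
  calc (s * (1 + e)) ^ 2 = s * s + s * s * e + s * e * s + s * e * s * e := by noncomm_ring
    _ = 1 + (e + s * e * s) := by rw [hs, hses, one_mul, add_zero, add_assoc]

theorem sq_mul_one_add_mul_sq_mul_one_sub_eq_one (hs : s * s = 1) (he : e * e = 0)
    (hese : e * s * e = 0) : (s * (1 + e)) ^ 2 * (s * (1 - e)) ^ 2 = 1 := by
  have hese' : (-e) * s * (-e) = 0 := by simp [hese]
  rw [sub_eq_add_neg, sq_mul_one_add_eq hs hese, sq_mul_one_add_eq hs hese']
  have hm : (e + s * e * s) * (e + s * e * s) = 0 := by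
    calc (e + s * e * s) * (e + s * e * s)
        = e * e + e * s * e * s + s * (e * s * e) + s * e * (s * s) * e * s := by noncomm_ring
      _ = 0 := by rw [he, hese, hs]; simp [mul_assoc, he]
  calc (1 + (e + s * e * s)) * (1 + (-e + s * -e * s))
      = 1 - (e + s * e * s) * (e + s * e * s) := by noncomm_ring
    _ = 1 := by rw [hm, sub_zero]

theorem Units.val_inv_eq_one_sub_of_val_eq_one_add {t : αˣ} (he : e * e = 0)
    (ht : (t : α) = 1 + e) : ((t⁻¹ : αˣ) : α) = 1 - e :=
  Units.inv_eq_of_mul_eq_one_right <| calc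
    (t : α) * (1 - e) = 1 - e * e := by rw [ht]; noncomm_ring
    _ = 1 := by rw [he, sub_zero]

end Ring

/-- For `d = 2`, `k = 3` (parameters `(1/4,1/3,2/3,3/4)`), the
hypergeometric matrices satisfy `(R^6·T)²·(R^6·T⁻¹)² = 1`, where `T⁻¹` is the inverse
of `T` in `GL(4,ℤ)`. -/
theorem relation_d2_k3
    (R T : GL (Fin 4) ℤ)
    (hR : (R : Matrix (Fin 4) (Fin 4) ℤ) =
      !![1, 1, 0, 0; 0, -2, -1, 1; 2, 2, 1, 0; 0, -3, -1, 1])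
    (hT : (T : Matrix (Fin 4) (Fin 4) ℤ) =
      !![1, 0, 0, 0; 0, 1, 0, 1; 0, 0, 1, 0; 0, 0, 0, 1]) :
    (R ^ 6 * T) ^ 2 * (R ^ 6 * T⁻¹) ^ 2 = 1 := by
  set s : Matrix (Fin 4) (Fin 4) ℤ := !![3, 0, 0, 2; 0, -3, -2, 0; 0, 4, 3, 0; -4, 0, 0, -3]
  set e : Matrix (Fin 4) (Fin 4) ℤ := !![0, 0, 0, 0; 0, 0, 0, 1; 0, 0, 0, 0; 0, 0, 0, 0]
  have he : e * e = 0 := by decide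
  have hRs : (R : Matrix (Fin 4) (Fin 4) ℤ) ^ 6 = s := by rw [hR]; decide
  have hTe : (T : Matrix (Fin 4) (Fin 4) ℤ) = 1 + e := by rw [hT]; decide
  apply Units.ext
  push_cast [hRs, hTe, Units.val_inv_eq_one_sub_of_val_eq_one_add he hTe]
  exact sq_mul_one_add_mul_sq_mul_one_sub_eq_one (by decide) he (by decide)
end

section
/- Let R and T be the above 4×4 integer matrices with d = 3 and k = 4 (the case with parameters (1/6, 1/3, 2/3, 5/6)). Then (R^3·T)^2·(R^3·T^{-1})^2 = I, where T^{-1} is the inverse of T in GL(4, ℤ). -/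
/-!
Both `(R³T)²` and `(R³T⁻¹)²` are unipotent: they equal `1 + N` and `1 - N` for one and the same
integer matrix `N` with `N² = 0`, so they are mutually inverse.
-/

open scoped MatrixGroups

theorem one_add_mul_one_sub_of_mul_self_eq_zero {α : Type*} [Ring α] {N : α} (hN : N * N = 0) :
    (1 + N) * (1 - N) = 1 := by
  rw [← (Commute.one_left N).mul_self_sub_mul_self_eq, hN, mul_one, sub_zero]

theorem Units.mul_eq_one_of_val_eq_one_add_of_val_eq_one_sub {α : Type*} [Ring α] {u v : αˣ}
    {N : α} (hN : N * N = 0) (hu : (u : α) = 1 + N) (hv : (v : α) = 1 - N) : u * v = 1 :=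
  Units.ext <| by rw [Units.val_mul, hu, hv, one_add_mul_one_sub_of_mul_self_eq_zero hN, Units.val_one]

/-- For `d = 3`, `k = 4` (parameters `(1/6,1/3,2/3,5/6)`), the
hypergeometric matrices satisfy `(R^3·T)²·(R^3·T⁻¹)² = 1`, where `T⁻¹` is the inverse
of `T` in `GL(4,ℤ)`. -/
theorem relation_d3_k4
    (R T : GL (Fin 4) ℤ)
    (hR : (R : Matrix (Fin 4) (Fin 4) ℤ) =
      !![1, 1, 0, 0; 0, -3, -1, 1; 3, 3, 1, 0; 0, -4, -1, 1])
    (hT : (T : Matrix (Fin 4) (Fin 4) ℤ) =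
      !![1, 0, 0, 0; 0, 1, 0, 1; 0, 0, 1, 0; 0, 0, 0, 1]) :
    (R ^ 3 * T) ^ 2 * (R ^ 3 * T⁻¹) ^ 2 = 1 := by
  set N : Matrix (Fin 4) (Fin 4) ℤ := !![0, 0, 0, 0; 6, 0, 0, 5; -9, 0, 0, -6; 0, 0, 0, 0]
  have hTinv : ((T⁻¹ : GL (Fin 4) ℤ) : Matrix (Fin 4) (Fin 4) ℤ) =
      !![1, 0, 0, 0; 0, 1, 0, -1; 0, 0, 1, 0; 0, 0, 0, 1] :=
    Units.inv_eq_of_mul_eq_one_right (by rw [hT]; decide)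
  have hN : N * N = 0 := by decide
  have hplus : (((R ^ 3 * T) ^ 2 : GL (Fin 4) ℤ) : Matrix (Fin 4) (Fin 4) ℤ) = 1 + N := by
    simp only [Units.val_pow_eq_pow_val, Units.val_mul, hR, hT]
    decide
  have hminus : (((R ^ 3 * T⁻¹) ^ 2 : GL (Fin 4) ℤ) : Matrix (Fin 4) (Fin 4) ℤ) = 1 - N := by
    simp only [Units.val_pow_eq_pow_val, Units.val_mul, hR, hTinv]
    decide
  exact Units.mul_eq_one_of_val_eq_one_add_of_val_eq_one_sub hN hplus hminus
end
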